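/- Let p, N ≥ 1, K ≥ 1, λ ≥ 0, let x_1,…,x_N ∈ ℝ^p, and let w_1,…,w_N be nonnegative reals with ∑_{n=1}^N w_n > 0. Let γ_kn ≥ 0 satisfy ∑_{k=1}^K γ_kn = 1 for each n, and assume a_k := ∑_{n=1}^N γ_kn w_n > 0 for each k. Let φ(x | μ, Θ) = (2π)^{−p/2} (det Θ)^{1/2} exp(−(1/2)(x − μ)ᵀ Θ (x − μ)) denote the p-variate Gaussian density with mean μ and precision matrix Θ, and let ‖Θ‖_{1,off} = ∑_{i ≠ j} |Θ_ij| denote the entrywise ℓ_1 norm of the off-diagonal entries. Define π̂_k = a_k / ∑_{n=1}^N w_n, μ̂_k = (1/a_k) ∑_{n=1}^N γ_kn w_n x_n, and Â_k = ∑_{n=1}^N (γ_kn w_n / a_k) (x_n − μ̂_k)(x_n − μ̂_k)ᵀ, and suppose for each k that Θ̂_k is a symmetric positive definite matrix maximizing log det Θ − tr(Θ Â_k) − (2Nλ / a_k) ‖Θ‖_{1,off} over symmetric positive definite matrices Θ. Then (π̂, μ̂, Θ̂) maximizes Q(ρ, m, S) = (1/N) ∑_{n=1}^N ∑_{k=1}^K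 γ_kn [ log ρ_k + log φ(x_n | m_k, S_k) ] w_n − λ ∑_{k=1}^K ‖S_k‖_{1,off} over all (ρ, m, S) with ρ_k > 0 for all k, ∑_{k=1}^K ρ_k = 1, and each S_k symmetric positive definite. -/

import Mathlib

/-!
With `c n = γ k n * w n` and `a = ∑ c n`, the parallel-axis identity
`∑ c n (x n - m)ᵀ S (x n - m) = a (tr (S Â) + (μ̂ - m)ᵀ S (μ̂ - m))` splits `N * Q` into
`∑ₖ aₖ log ρₖ`, which Gibbs' inequality maximises at `ρ = π̂`, plus, up to a constant, one term
`aₖ / 2 (log det Sₖ - tr (Sₖ Âₖ) - (2Nλ / aₖ) ‖Sₖ‖ - (μ̂ₖ - mₖ)ᵀ Sₖ (μ̂ₖ - mₖ))` per component.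
Positive definiteness of `Sₖ` makes the quadratic form maximal at `mₖ = μ̂ₖ`, and the graphical-lasso
hypothesis makes the rest maximal at `Sₖ = Θ̂ₖ`.
-/

open BigOperators Matrix

/-- The `p`-variate Gaussian density with mean `μ` and precision matrix `Θ`. -/
noncomputable def gaussDensity (p : ℕ) (μ : Fin p → ℝ) (Θ : Matrix (Fin p) (Fin p) ℝ)
    (x : Fin p → ℝ) : ℝ :=
  (2 * Real.pi) ^ (-(p : ℝ) / 2) * Real.sqrt Θ.det *
    Real.exp (-(1 / 2) * ((x - μ) ⬝ᵥ Θ *ᵥ (x - μ)))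

/-- The entrywise ℓ₁ norm of the off-diagonal entries of a matrix. -/
def offDiagL1 (p : ℕ) (Θ : Matrix (Fin p) (Fin p) ℝ) : ℝ :=
  ∑ i, ∑ j, if i ≠ j then |Θ i j| else 0

open Finset Real

section WeightedMoments

variable {ι n K E : Type*} [Fintype ι] [Field K]

noncomputable def weightedMean [AddCommGroup E] [Module K E] (c : ι → K) (x : ι → E) : E :=
  (1 / ∑ i, c i) • ∑ i, c i • x i

noncomputable def weightedScatter (c : ι → K) (x : ι → n → K) : Matrix n n K :=
  ∑ i, (c i / ∑ j, c j) • vecMulVec (x i - weightedMean c x) (x i - weightedMean c x)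

theorem sum_smul_sub_weightedMean [AddCommGroup E] [Module K E] {c : ι → K}
    (hc : ∑ i, c i ≠ 0) (x : ι → E) : ∑ i, c i • (x i - weightedMean c x) = 0 := by
  simp only [weightedMean, smul_sub]
  rw [sum_sub_distrib, ← sum_smul, smul_smul, mul_one_div_cancel hc, one_smul, sub_self]

theorem sum_smul_vecMulVec_sub {c : ι → K} (hc : ∑ i, c i ≠ 0) (x : ι → n → K) (m : n → K) :
    ∑ i, c i • vecMulVec (x i - m) (x i - m) =
      (∑ i, c i) • (weightedScatter c x +
        vecMulVec (weightedMean c x - m) (weightedMean c x - m)) := by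
  unfold weightedScatter
  set μ := weightedMean c x
  have hmean (a : n) : ∑ i, c i * (x i a - μ a) = 0 := by
    simpa using congrFun (sum_smul_sub_weightedMean hc x) a
  ext a b
  have hsplit (i : ι) : c i * ((x i a - m a) * (x i b - m b)) =
      c i * ((x i a - μ a) * (x i b - μ b)) + c i * (x i a - μ a) * (μ b - m b) +
        c i * (x i b - μ b) * (μ a - m a) + c i * ((μ a - m a) * (μ b - m b)) := by ring
  simp only [Matrix.sum_apply, Matrix.smul_apply, Matrix.add_apply,
    vecMulVec_apply, Pi.sub_apply, smul_eq_mul, sum_mul, mul_add, mul_sum]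
  simp only [hsplit, sum_add_distrib, ← sum_mul, hmean, zero_mul, add_zero]
  congr 1
  exact sum_congr rfl fun i _ => by field_simp

theorem dotProduct_mulVec_eq_trace_mul_vecMulVec {R : Type*} [CommSemiring R] [Fintype n]
    (S : Matrix n n R) (v : n → R) : v ⬝ᵥ S *ᵥ v = trace (S * vecMulVec v v) := by
  rw [mul_vecMulVec, trace_vecMulVec, dotProduct_comm]

theorem sum_mul_dotProduct_mulVec_sub [Fintype n] {c : ι → K} (hc : ∑ i, c i ≠ 0)
    (x : ι → n → K) (m : n → K) (S : Matrix n n K) :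
    ∑ i, c i * ((x i - m) ⬝ᵥ S *ᵥ (x i - m)) =
      (∑ i, c i) * (trace (S * weightedScatter c x) +
        (weightedMean c x - m) ⬝ᵥ S *ᵥ (weightedMean c x - m)) := by
  calc ∑ i, c i * ((x i - m) ⬝ᵥ S *ᵥ (x i - m))
      = trace (S * ∑ i, c i • vecMulVec (x i - m) (x i - m)) := by
        simp only [dotProduct_mulVec_eq_trace_mul_vecMulVec, Matrix.mul_sum, trace_sum,
          mul_smul_comm, trace_smul, smul_eq_mul]
    _ = _ := by
        rw [sum_smul_vecMulVec_sub hc, mul_smul_comm, trace_smul, mul_add, trace_add,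
          ← dotProduct_mulVec_eq_trace_mul_vecMulVec, smul_eq_mul]

end WeightedMoments

theorem log_gaussDensity {p : ℕ} (μ : Fin p → ℝ) {Θ : Matrix (Fin p) (Fin p) ℝ}
    (hΘ : 0 < Θ.det) (x : Fin p → ℝ) :
    log (gaussDensity p μ Θ x) =
      (log Θ.det - (x - μ) ⬝ᵥ Θ *ᵥ (x - μ) - p * log (2 * π)) / 2 := by
  have h2π : 0 < 2 * π := by positivity
  rw [gaussDensity, log_mul (by positivity) (exp_ne_zero _),
    log_mul (by positivity) (sqrt_pos.2 hΘ).ne', log_rpow h2π, log_sqrt hΘ.le, log_exp]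
  ring

theorem sum_mul_log_gaussDensity {ι : Type*} [Fintype ι] {p : ℕ} {c : ι → ℝ}
    (hc : ∑ i, c i ≠ 0) (x : ι → Fin p → ℝ) (m : Fin p → ℝ) {S : Matrix (Fin p) (Fin p) ℝ}
    (hS : 0 < S.det) :
    ∑ i, c i * log (gaussDensity p m S (x i)) =
      (∑ i, c i) / 2 * (log S.det - trace (S * weightedScatter c x) -
        (weightedMean c x - m) ⬝ᵥ S *ᵥ (weightedMean c x - m) - p * log (2 * π)) := by
  have hquad := sum_mul_dotProduct_mulVec_sub hc x m S
  simp only [log_gaussDensity _ hS, mul_div_assoc', ← sum_div, mul_sub, sum_sub_distrib,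
    ← sum_mul, hquad]
  ring

theorem sum_mul_log_gaussDensity_sub_le {ι : Type*} [Fintype ι] {p : ℕ} {c : ι → ℝ}
    (hc : 0 < ∑ i, c i) (x : ι → Fin p → ℝ) (pen : Matrix (Fin p) (Fin p) ℝ → ℝ) (t : ℝ)
    {Θ S : Matrix (Fin p) (Fin p) ℝ} (hΘ : 0 < Θ.det) (hS : S.PosDef)
    (hΘS : log S.det - trace (S * weightedScatter c x) - t / (∑ i, c i) * pen S ≤
      log Θ.det - trace (Θ * weightedScatter c x) - t / (∑ i, c i) * pen Θ)
    (m : Fin p → ℝ) :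
    ∑ i, c i * log (gaussDensity p m S (x i)) - t / 2 * pen S ≤
      ∑ i, c i * log (gaussDensity p (weightedMean c x) Θ (x i)) - t / 2 * pen Θ := by
  have hquad : 0 ≤ (weightedMean c x - m) ⬝ᵥ S *ᵥ (weightedMean c x - m) := by
    simpa using hS.posSemidef.dotProduct_mulVec_nonneg (weightedMean c x - m)
  have hpen (T : Matrix (Fin p) (Fin p) ℝ) :
      t / 2 * pen T = (∑ i, c i) / 2 * (t / (∑ i, c i) * pen T) := by
    field_simp
  rw [sum_mul_log_gaussDensity hc.ne' x m hS.det_pos, sum_mul_log_gaussDensity hc.ne' x _ hΘ,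
    hpen, hpen, ← mul_sub, ← mul_sub]
  refine mul_le_mul_of_nonneg_left ?_ (by positivity)
  simp only [sub_self, mulVec_zero, zero_dotProduct]
  linarith

theorem sum_mul_log_le_sum_mul_log_div_sum {ι : Type*} [Fintype ι] {a ρ : ι → ℝ}
    (ha : ∀ i, 0 < a i) (hρ : ∀ i, 0 < ρ i) (hρ1 : ∑ i, ρ i ≤ 1) :
    ∑ i, a i * log (ρ i) ≤ ∑ i, a i * log (a i / ∑ j, a j) := by
  set W := ∑ j, a j
  have hW : 0 ≤ W := sum_nonneg fun j _ => (ha j).le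
  have hterm (i : ι) : a i * log (ρ i) ≤ a i * log (a i / W) + (ρ i * W - a i) := by
    have hai := ha i
    have hρi := hρ i
    have hWi : 0 < W := hai.trans_le (single_le_sum (fun j _ => (ha j).le) (mem_univ i))
    have hlog : log (ρ i) - log (a i / W) = log (ρ i * W / a i) := by
      rw [log_div hai.ne' hWi.ne', log_div (by positivity) hai.ne', log_mul hρi.ne' hWi.ne']
      ring
    have hle : a i * log (ρ i * W / a i) ≤ a i * (ρ i * W / a i - 1) :=
      mul_le_mul_of_nonneg_left (log_le_sub_one_of_pos (by positivity)) hai.le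
    have hcancel : a i * (ρ i * W / a i - 1) = ρ i * W - a i := by field_simp
    rw [← hlog, hcancel] at hle
    linarith
  calc ∑ i, a i * log (ρ i)
      ≤ ∑ i, (a i * log (a i / W) + (ρ i * W - a i)) := sum_le_sum fun i _ => hterm i
    _ = ∑ i, a i * log (a i / W) + ((∑ i, ρ i) * W - W) := by
        rw [sum_add_distrib, sum_sub_distrib, ← sum_mul]
    _ ≤ ∑ i, a i * log (a i / W) := by nlinarith

theorem m_step_correctness_general (p N K : ℕ) (hN : 1 ≤ N)
    (lam : ℝ) (x : Fin N → Fin p → ℝ)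
    (w : Fin N → ℝ)
    (γ : Fin K → Fin N → ℝ) (hγ1 : ∀ n, ∑ k, γ k n = 1)
    (ha : ∀ k, 0 < ∑ n, γ k n * w n)
    (Θhat : Fin K → Matrix (Fin p) (Fin p) ℝ) :
    let a : Fin K → ℝ := fun k => ∑ n, γ k n * w n
    let πhat : Fin K → ℝ := fun k => a k / ∑ n, w n
    let μhat : Fin K → Fin p → ℝ := fun k => (1 / a k) • ∑ n, (γ k n * w n) • x n
    let Ahat : Fin K → Matrix (Fin p) (Fin p) ℝ := fun k =>
      ∑ n, (γ k n * w n / a k) •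
        (Matrix.of fun i j => (x n i - μhat k i) * (x n j - μhat k j))
    let Q : (Fin K → ℝ) → (Fin K → Fin p → ℝ) → (Fin K → Matrix (Fin p) (Fin p) ℝ) → ℝ :=
      fun ρ m S =>
        (1 / (N : ℝ)) * (∑ n, ∑ k,
            γ k n * (Real.log (ρ k) + Real.log (gaussDensity p (m k) (S k) (x n))) * w n)
          - lam * ∑ k, offDiagL1 p (S k)
    (∀ k, (Θhat k).PosDef ∧
        ∀ S : Matrix (Fin p) (Fin p) ℝ, S.PosDef →
          Real.log S.det - (S * Ahat k).trace - (2 * N * lam / a k) * offDiagL1 p S ≤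
            Real.log (Θhat k).det - (Θhat k * Ahat k).trace
              - (2 * N * lam / a k) * offDiagL1 p (Θhat k)) →
      ∀ (ρ : Fin K → ℝ) (m : Fin K → Fin p → ℝ) (S : Fin K → Matrix (Fin p) (Fin p) ℝ),
        (∀ k, 0 < ρ k) → (∑ k, ρ k = 1) → (∀ k, (S k).PosDef) →
        Q ρ m S ≤ Q πhat μhat Θhat := by
  intro a πhat μhat Ahat Q hopt ρ m S hρ hρ1 hS
  have hN0 : (N : ℝ) ≠ 0 := Nat.cast_ne_zero.2 (by omega)
  have hQ (ρ' : Fin K → ℝ) (m' : Fin K → Fin p → ℝ) (S' : Fin K → Matrix (Fin p) (Fin p) ℝ) :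
      Q ρ' m' S' = 1 / (N : ℝ) * (∑ k, a k * log (ρ' k) +
        ∑ k, (∑ n, γ k n * w n * log (gaussDensity p (m' k) (S' k) (x n)) -
          2 * N * lam / 2 * offDiagL1 p (S' k))) := by
    have hsplit (k : Fin K) (n : Fin N) :
        γ k n * (log (ρ' k) + log (gaussDensity p (m' k) (S' k) (x n))) * w n =
          γ k n * w n * log (ρ' k) + γ k n * w n * log (gaussDensity p (m' k) (S' k) (x n)) := by
      ring
    simp only [Q]
    rw [sum_comm]
    simp_rw [hsplit, sum_add_distrib, ← sum_mul]
    rw [sum_sub_distrib, ← mul_sum]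
    field_simp
    ring
  have hsum : ∑ k, a k = ∑ n, w n := by
    rw [sum_comm]
    simp [← sum_mul, hγ1]
  rw [hQ, hQ]
  gcongr _ * (?_ + ∑ k, ?_)
  · have hgibbs := sum_mul_log_le_sum_mul_log_div_sum (a := a) ha hρ hρ1.le
    rwa [hsum] at hgibbs
  · -- `μhat k` and `Ahat k` unfold to `weightedMean` and `weightedScatter` of `γ k · * w ·`.
    exact sum_mul_log_gaussDensity_sub_le (ha k) x _ _ (hopt k).1.det_pos (hS k)
      ((hopt k).2 _ (hS k)) (m k)

theorem m_step_correctness (p N K : ℕ) (hp : 1 ≤ p) (hN : 1 ≤ N) (hK : 1 ≤ K)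
    (lam : ℝ) (hlam : 0 ≤ lam) (x : Fin N → Fin p → ℝ)
    (w : Fin N → ℝ) (hw : ∀ n, 0 ≤ w n) (hW : 0 < ∑ n, w n)
    (γ : Fin K → Fin N → ℝ) (hγ : ∀ k n, 0 ≤ γ k n) (hγ1 : ∀ n, ∑ k, γ k n = 1)
    (ha : ∀ k, 0 < ∑ n, γ k n * w n)
    (Θhat : Fin K → Matrix (Fin p) (Fin p) ℝ) :
    let a : Fin K → ℝ := fun k => ∑ n, γ k n * w n
    let πhat : Fin K → ℝ := fun k => a k / ∑ n, w n
    let μhat : Fin K → Fin p → ℝ := fun k => (1 / a k) • ∑ n, (γ k n * w n) • x n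
    let Ahat : Fin K → Matrix (Fin p) (Fin p) ℝ := fun k =>
      ∑ n, (γ k n * w n / a k) •
        (Matrix.of fun i j => (x n i - μhat k i) * (x n j - μhat k j))
    let Q : (Fin K → ℝ) → (Fin K → Fin p → ℝ) → (Fin K → Matrix (Fin p) (Fin p) ℝ) → ℝ :=
      fun ρ m S =>
        (1 / (N : ℝ)) * (∑ n, ∑ k,
            γ k n * (Real.log (ρ k) + Real.log (gaussDensity p (m k) (S k) (x n))) * w n)
          - lam * ∑ k, offDiagL1 p (S k)
    (∀ k, (Θhat k).PosDef ∧
        ∀ S : Matrix (Fin p) (Fin p) ℝ, S.PosDef →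
          Real.log S.det - (S * Ahat k).trace - (2 * N * lam / a k) * offDiagL1 p S ≤
            Real.log (Θhat k).det - (Θhat k * Ahat k).trace
              - (2 * N * lam / a k) * offDiagL1 p (Θhat k)) →
      ∀ (ρ : Fin K → ℝ) (m : Fin K → Fin p → ℝ) (S : Fin K → Matrix (Fin p) (Fin p) ℝ),
        (∀ k, 0 < ρ k) → (∑ k, ρ k = 1) → (∀ k, (S k).PosDef) →
        Q ρ m S ≤ Q πhat μhat Θhat :=
  m_step_correctness_general p N K hN lam x w γ hγ1 ha Θhat
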